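/- For a permutation σ in one-line notation obtained by Foata's canonicalization, the number of cycles of the original permutation equals the number of left-to-right minima of the word σ(1), ..., σ(n). -/

import Mathlib

open Classical in
/-- The minima of the cycles of `σ` (including fixed points), listed in decreasing order. -/
noncomputable def cycleMinsDesc {n : ℕ} (σ : Equiv.Perm (Fin n)) : List (Fin n) :=
  ((List.finRange n).filter fun x => decide (∀ y, σ.SameCycle x y → x ≤ y)).reverse

/-- The cycle of `σ` containing `m`, written starting at `m` (a fixed point yields `[m]`). -/
def cycleBlock {n : ℕ} (σ : Equiv.Perm (Fin n)) (m : Fin n) : List (Fin n) :=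
  (List.range (max (σ.cycleOf m).support.card 1)).map fun i => (σ ^ i) m

/-- Foata's word: canonical cycle notation with parentheses erased. -/
noncomputable def foataWord {n : ℕ} (σ : Equiv.Perm (Fin n)) : List (Fin n) :=
  (cycleMinsDesc σ).flatMap (cycleBlock σ)

/-! In Foata's word every cycle is written starting from its minimum, and the blocks appear in
decreasing order of their minima. A block head is therefore smaller than every earlier entry
(each earlier entry is at least the head of its own block, which is larger), while any other
entry exceeds the head of its own block. So the left-to-right minima of the word are exactly the
cycle minima, and `τ` matches the two sets. -/

namespace List

theorem forall_mem_take_map_finRange_iff {α : Type*} {n : ℕ} (f : Fin n → α) (i : Fin n)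
    (p : α → Prop) : (∀ x ∈ ((finRange n).map f).take i, p x) ↔ ∀ j < i, p (f j) := by
  have hmem (j : Fin n) : j ∈ (finRange n).take i ↔ j < i := by
    simp [mem_take_iff_getElem, Fin.ext_iff]
  simp [← map_take, hmem]

variable {α : Type*} [LinearOrder α]

theorem forall_mem_take_lt_iff_mem_of_eq_flatMap {Ms : List α} {T : α → List α}
    (hMs : Ms.Pairwise (· > ·)) (hT : ∀ m ∈ Ms, ∀ v ∈ T m, m < v ∧ v ∉ Ms) {w : List α}
    (hw : w = Ms.flatMap fun m => m :: T m) {i : ℕ} (hi : i < w.length) :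
    (∀ x ∈ w.take i, w[i] < x) ↔ w[i] ∈ Ms := by
  subst hw
  induction Ms generalizing i with
  | nil => simp at hi
  | cons m Ms ih =>
    obtain ⟨hm, hMs⟩ := pairwise_cons.1 hMs
    have hT' : ∀ m' ∈ Ms, ∀ v ∈ T m', m' < v ∧ v ∉ Ms := fun m' hm' v hv =>
      (hT m' (mem_cons_of_mem _ hm') v hv).imp_right (mt (mem_cons_of_mem _))
    simp only [flatMap_cons] at hi ⊢
    rcases lt_or_ge i (m :: T m).length with hlt | hge
    · rw [take_append_of_le_length hlt.le, getElem_append_left hlt]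
      cases i with
      | zero => simp
      | succ k =>
        have htail : m < (T m)[k]'(by simpa using hlt) ∧ (T m)[k]'(by simpa using hlt) ∉ m :: Ms :=
          hT m mem_cons_self _ (getElem_mem _)
        refine iff_of_false (fun h => htail.1.asymm (h m ?_)) htail.2
        simp
    · obtain ⟨k, rfl⟩ := Nat.exists_eq_add_of_le hge
      rw [take_length_add_append, getElem_append_right (by omega)]
      simp only [Nat.add_sub_cancel_left, forall_mem_append, mem_cons]
      have hk : k < (Ms.flatMap fun m => m :: T m).length := by
        simp only [length_append] at hi; omega
      have hv_ne : (Ms.flatMap fun m => m :: T m)[k] ≠ m := by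
        obtain ⟨m', hm', hv⟩ := mem_flatMap.1 (getElem_mem hk)
        rcases mem_cons.1 hv with h | h
        · exact h ▸ (hm m' hm').ne
        · exact fun h' => (hT m' (mem_cons_of_mem _ hm') _ h).2 (h' ▸ mem_cons_self)
      rw [← ih hMs hT' hk, or_iff_right hv_ne, and_iff_right_iff_imp]
      intro hmin x hx
      have hlt_m := hm _ ((ih hMs hT' hk).1 hmin)
      rcases hx with rfl | hx
      · exact hlt_m
      · exact hlt_m.trans (hT m mem_cons_self x hx).1

end List

namespace Equiv.Perm

variable {α : Type*} [DecidableEq α] [Fintype α]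

theorem pow_apply_ne_self_of_lt_card_support_cycleOf (f : Perm α) {x : α} {r : ℕ}
    (hr0 : 0 < r) (hr : r < (f.cycleOf x).support.card) : (f ^ r) x ≠ x := by
  have hx : x ∈ (f.cycleOf x).support := by
    obtain ⟨y, hy⟩ := Finset.card_pos.1 (hr0.trans hr)
    exact mem_support_cycleOf_iff.2 ⟨SameCycle.refl _ _, (mem_support_cycleOf_iff.1 hy).2⟩
  rw [Ne, (f.isCycleOn_support_cycleOf x).pow_apply_eq hx]
  exact Nat.not_dvd_of_pos_of_lt hr0 hr

end Equiv.Perm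

section Foata

variable {n : ℕ} (σ : Equiv.Perm (Fin n))

theorem mem_cycleMinsDesc {m : Fin n} :
    m ∈ cycleMinsDesc σ ↔ ∀ y, σ.SameCycle m y → m ≤ y := by
  simp [cycleMinsDesc]

theorem cycleMinsDesc_pairwise : (cycleMinsDesc σ).Pairwise (· > ·) := by
  rw [cycleMinsDesc, List.pairwise_reverse]
  exact (List.pairwise_lt_finRange n).sublist List.filter_sublist

theorem cycleBlock_eq_cons_tail (m : Fin n) : cycleBlock σ m = m :: (cycleBlock σ m).tail := by
  rw [cycleBlock, ← Nat.sub_add_cancel (le_max_right _ 1), List.range_succ_eq_map]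
  simp

theorem mem_cycleBlock_tail {m v : Fin n} (hv : v ∈ (cycleBlock σ m).tail) :
    σ.SameCycle m v ∧ v ≠ m := by
  rw [cycleBlock, ← List.map_tail, List.tail_range, List.mem_map] at hv
  obtain ⟨r, hr, rfl⟩ := hv
  rw [List.mem_range'_1] at hr
  exact ⟨(Equiv.Perm.SameCycle.refl σ m).pow_right,
    σ.pow_apply_ne_self_of_lt_card_support_cycleOf (by omega) (by omega)⟩

theorem foataWord_eq_flatMap :
    foataWord σ = (cycleMinsDesc σ).flatMap fun m => m :: (cycleBlock σ m).tail := by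
  rw [foataWord]
  congr 1
  funext m
  exact cycleBlock_eq_cons_tail σ m

theorem lt_and_not_mem_cycleMinsDesc_of_mem_cycleBlock_tail {m : Fin n}
    (hm : m ∈ cycleMinsDesc σ) {v : Fin n} (hv : v ∈ (cycleBlock σ m).tail) :
    m < v ∧ v ∉ cycleMinsDesc σ := by
  obtain ⟨hmv, hne⟩ := mem_cycleBlock_tail σ hv
  have hlt : m < v := ((mem_cycleMinsDesc σ).1 hm v hmv).lt_of_ne hne.symm
  exact ⟨hlt, fun hv' => hlt.not_ge ((mem_cycleMinsDesc σ).1 hv' m hmv.symm)⟩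

end Foata

open Classical Finset in
/-- If `τ` (in one-line notation) is the permutation obtained from `σ` by Foata's
canonicalization, then the number of cycles of `σ` (counted by cycle minima, including fixed
points) equals the number of left-to-right minima of the word `τ 1, …, τ n`. -/
theorem stmt17 (n : ℕ) (σ τ : Equiv.Perm (Fin n))
    (h : foataWord σ = (List.finRange n).map τ) :
    (Finset.univ.filter (fun x : Fin n => ∀ y, σ.SameCycle x y → x ≤ y)).card
      = (Finset.univ.filter (fun i : Fin n => ∀ j < i, τ i < τ j)).card := by
  have hw : (List.finRange n).map τ =
      (cycleMinsDesc σ).flatMap fun m => m :: (cycleBlock σ m).tail :=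
    h ▸ foataWord_eq_flatMap σ
  have hLR (i : Fin n) : (∀ j < i, τ i < τ j) ↔ ∀ y, σ.SameCycle (τ i) y → τ i ≤ y := by
    have := List.forall_mem_take_lt_iff_mem_of_eq_flatMap (cycleMinsDesc_pairwise σ)
      (fun m hm v hv => lt_and_not_mem_cycleMinsDesc_of_mem_cycleBlock_tail σ hm hv) hw
      (i := i) (by simp)
    simpa [List.forall_mem_take_map_finRange_iff, mem_cycleMinsDesc] using this
  exact (Finset.card_equiv τ fun i => by simp [hLR]).symm
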